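/- There exists a winning quantum strategy for the Magic Square game: a finite-dimensional complex inner product space H, a nonzero vector ψ ∈ H, for each x ∈ Fin 3 a family of orthogonal projections (P^x_a)_{a ∈ V_A} on H with ∑_{a ∈ V_A} P^x_a = 1, and for each y ∈ Fin 3 a family of orthogonal projections (Q^y_b)_{b ∈ V_B} with ∑_{b ∈ V_B} Q^y_b = 1, such that P^x_a ∘ Q^y_b = Q^y_b ∘ P^x_a for all x, y, a, b, and such that ⟪ψ, P^x_a (Q^y_b ψ)⟫ ≠ 0 implies a y = b x. Hence quantum physics attains the algebraic maximum 9 of the Magic Square Bell expression, while classical strategies are bounded by 8. -/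

import Mathlib

open scoped InnerProductSpace

/-- Alice's admissible outputs for the Magic Square game: triples of bits with
even parity. -/
def MagicVA : Type := {a : Fin 3 → ZMod 2 // a 0 + a 1 + a 2 = 0}

/-- Bob's admissible outputs for the Magic Square game: triples of bits with
odd parity. -/
def MagicVB : Type := {b : Fin 3 → ZMod 2 // b 0 + b 1 + b 2 = 1}

instance : Fintype MagicVA := by unfold MagicVA; infer_instance
instance : Fintype MagicVB := by unfold MagicVB; infer_instance

open Matrix

namespace MagicSq




abbrev H4 : Type := EuclideanSpace ℂ (Fin 4 × Fin 4)

noncomputable def Lm (p : Matrix (Fin 4) (Fin 4) ℂ) : H4 →ₗ[ℂ] H4 where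
  toFun u := WithLp.toLp 2 (fun ij : Fin 4 × Fin 4 => ∑ k, p ij.1 k * u (k, ij.2))
  map_add' u v := by
    ext ij
    simp [PiLp.add_apply, mul_add, Finset.sum_add_distrib]
  map_smul' c u := by
    ext ij
    simp only [PiLp.smul_apply, smul_eq_mul, RingHom.id_apply, Finset.mul_sum]
    exact Finset.sum_congr rfl fun k _ => by ring

noncomputable def Rm (q : Matrix (Fin 4) (Fin 4) ℂ) : H4 →ₗ[ℂ] H4 where
  toFun u := WithLp.toLp 2 (fun ij : Fin 4 × Fin 4 => ∑ k, u (ij.1, k) * q k ij.2)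
  map_add' u v := by
    ext ij
    simp [PiLp.add_apply, add_mul, Finset.sum_add_distrib]
  map_smul' c u := by
    ext ij
    simp only [PiLp.smul_apply, smul_eq_mul, RingHom.id_apply, Finset.mul_sum]
    exact Finset.sum_congr rfl fun k _ => by ring

lemma Lm_apply (p : Matrix (Fin 4) (Fin 4) ℂ) (u : H4) (ij : Fin 4 × Fin 4) :
    Lm p u ij = ∑ k, p ij.1 k * u (k, ij.2) := rfl
lemma Rm_apply (q : Matrix (Fin 4) (Fin 4) ℂ) (u : H4) (ij : Fin 4 × Fin 4) :
    Rm q u ij = ∑ k, u (ij.1, k) * q k ij.2 := rfl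

lemma Lm_mul (p q : Matrix (Fin 4) (Fin 4) ℂ) : Lm p ∘ₗ Lm q = Lm (p * q) := by
  apply LinearMap.ext; intro u
  ext ij
  simp only [LinearMap.comp_apply, Lm_apply, Matrix.mul_apply, Finset.sum_mul, Finset.mul_sum]
  rw [Finset.sum_comm]
  exact Finset.sum_congr rfl fun k _ => Finset.sum_congr rfl fun l _ => by ring

lemma Rm_mul (p q : Matrix (Fin 4) (Fin 4) ℂ) : Rm p ∘ₗ Rm q = Rm (q * p) := by
  apply LinearMap.ext; intro u
  ext ij
  simp only [LinearMap.comp_apply, Rm_apply, Matrix.mul_apply, Finset.sum_mul, Finset.mul_sum]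
  rw [Finset.sum_comm]
  exact Finset.sum_congr rfl fun k _ => Finset.sum_congr rfl fun l _ => by ring

lemma Lm_Rm_comm (p q : Matrix (Fin 4) (Fin 4) ℂ) : Lm p ∘ₗ Rm q = Rm q ∘ₗ Lm p := by
  apply LinearMap.ext; intro u
  ext ij
  simp only [LinearMap.comp_apply, Lm_apply, Rm_apply, Finset.mul_sum, Finset.sum_mul]
  rw [Finset.sum_comm]
  exact Finset.sum_congr rfl fun k _ => Finset.sum_congr rfl fun l _ => by ring

lemma Lm_add (p q : Matrix (Fin 4) (Fin 4) ℂ) : Lm (p + q) = Lm p + Lm q := by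
  apply LinearMap.ext; intro u
  ext ij
  simp [Lm_apply, Matrix.add_apply, add_mul, Finset.sum_add_distrib, PiLp.add_apply,
    LinearMap.add_apply]

lemma Rm_add (p q : Matrix (Fin 4) (Fin 4) ℂ) : Rm (p + q) = Rm p + Rm q := by
  apply LinearMap.ext; intro u
  ext ij
  simp [Rm_apply, Matrix.add_apply, mul_add, Finset.sum_add_distrib, PiLp.add_apply,
    LinearMap.add_apply]

lemma Lm_one : Lm 1 = LinearMap.id := by
  apply LinearMap.ext; intro u
  ext ij
  simp [Lm_apply, Matrix.one_apply]

lemma Rm_one : Rm 1 = LinearMap.id := by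
  apply LinearMap.ext; intro u
  ext ij
  simp [Rm_apply, Matrix.one_apply]

lemma inner_eq (u v : H4) :
    ⟪u, v⟫_ℂ = ∑ i, ∑ j, (starRingEnd ℂ) (u (i, j)) * v (i, j) := by
  rw [PiLp.inner_apply, Fintype.sum_prod_type]
  simp [RCLike.inner_apply, mul_comm]

lemma Lm_adj (p : Matrix (Fin 4) (Fin 4) ℂ) (hp : pᴴ = p) (u v : H4) :
    ⟪Lm p u, v⟫_ℂ = ⟪u, Lm p v⟫_ℂ := by
  have key : ∀ i k, (starRingEnd ℂ) (p i k) = p k i := fun i k => by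
    conv_rhs => rw [← hp]
    simp [conjTranspose_apply]
  rw [inner_eq, inner_eq]
  simp only [Lm_apply, map_sum, _root_.map_mul, Finset.sum_mul, Finset.mul_sum]
  calc ∑ i, ∑ j, ∑ k, (starRingEnd ℂ) (p i k) * (starRingEnd ℂ) (u (k, j)) * v (i, j)
      = ∑ i, ∑ k, ∑ j, (starRingEnd ℂ) (p i k) * (starRingEnd ℂ) (u (k, j)) * v (i, j) :=
        Finset.sum_congr rfl fun i _ => Finset.sum_comm
    _ = ∑ k, ∑ i, ∑ j, (starRingEnd ℂ) (p i k) * (starRingEnd ℂ) (u (k, j)) * v (i, j) :=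
        Finset.sum_comm
    _ = ∑ i, ∑ j, ∑ k, (starRingEnd ℂ) (u (i, j)) * (p i k * v (k, j)) := by
        refine Finset.sum_congr rfl fun i _ => ?_
        rw [Finset.sum_comm]
        refine Finset.sum_congr rfl fun j _ => Finset.sum_congr rfl fun k _ => ?_
        rw [key]
        ring

lemma Rm_adj (q : Matrix (Fin 4) (Fin 4) ℂ) (hq : qᴴ = q) (u v : H4) :
    ⟪Rm q u, v⟫_ℂ = ⟪u, Rm q v⟫_ℂ := by
  have key : ∀ i k, (starRingEnd ℂ) (q i k) = q k i := fun i k => by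
    conv_rhs => rw [← hq]
    simp [conjTranspose_apply]
  rw [inner_eq, inner_eq]
  simp only [Rm_apply, map_sum, _root_.map_mul, Finset.sum_mul, Finset.mul_sum]
  refine Finset.sum_congr rfl fun i _ => ?_
  calc ∑ j, ∑ k, (starRingEnd ℂ) (u (i, k)) * (starRingEnd ℂ) (q k j) * v (i, j)
      = ∑ k, ∑ j, (starRingEnd ℂ) (u (i, k)) * (starRingEnd ℂ) (q k j) * v (i, j) :=
        Finset.sum_comm
    _ = ∑ j, ∑ k, (starRingEnd ℂ) (u (i, j)) * (v (i, k) * q k j) := by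
        refine Finset.sum_congr rfl fun j _ => Finset.sum_congr rfl fun k _ => ?_
        rw [key]
        ring

def ψ4 : H4 := WithLp.toLp 2 (fun ij : Fin 4 × Fin 4 => if ij.1 = ij.2 then (1 : ℂ) else 0)

lemma psi_ne : ψ4 ≠ 0 := by
  intro h
  have := congrArg (fun w : H4 => w ((0 : Fin 4), (0 : Fin 4))) h
  simp [ψ4] at this

lemma inner_psi (p q : Matrix (Fin 4) (Fin 4) ℂ) :
    ⟪ψ4, Lm p (Rm q ψ4)⟫_ℂ = (p * q).trace := by
  rw [inner_eq]
  simp [Lm_apply, Rm_apply, ψ4, Matrix.trace, Matrix.diag, Matrix.mul_apply,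
    apply_ite, Finset.sum_ite_eq, Finset.sum_ite_eq']




def pInt : Fin 3 → ZMod 2 → ZMod 2 → Matrix (Fin 4) (Fin 4) ℤ := fun x s t =>
  if x = 0 then (if s = 0 then (if t = 0 then !![0, 0, 0, 0; 0, 0, 0, 0; 0, 0, 0, 0; 0, 0, 0, 8] else !![0, 0, 0, 0; 0, 0, 0, 0; 0, 0, 8, 0; 0, 0, 0, 0]) else (if t = 0 then !![0, 0, 0, 0; 0, 8, 0, 0; 0, 0, 0, 0; 0, 0, 0, 0] else !![8, 0, 0, 0; 0, 0, 0, 0; 0, 0, 0, 0; 0, 0, 0, 0]))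
  else if x = 1 then (if s = 0 then (if t = 0 then !![2, 2, 2, 2; 2, 2, 2, 2; 2, 2, 2, 2; 2, 2, 2, 2] else !![2, 2, -2, -2; 2, 2, -2, -2; -2, -2, 2, 2; -2, -2, 2, 2]) else (if t = 0 then !![2, -2, 2, -2; -2, 2, -2, 2; 2, -2, 2, -2; -2, 2, -2, 2] else !![2, -2, -2, 2; -2, 2, 2, -2; -2, 2, 2, -2; 2, -2, -2, 2]))
  else (if s = 0 then (if t = 0 then !![2, 2, 2, -2; 2, 2, 2, -2; 2, 2, 2, -2; -2, -2, -2, 2] else !![2, 2, -2, 2; 2, 2, -2, 2; -2, -2, 2, -2; 2, 2, -2, 2]) else (if t = 0 then !![2, -2, 2, 2; -2, 2, -2, -2; 2, -2, 2, 2; 2, -2, 2, 2] else !![2, -2, -2, -2; -2, 2, 2, 2; -2, 2, 2, 2; -2, 2, 2, 2]))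

def qInt : Fin 3 → ZMod 2 → ZMod 2 → Matrix (Fin 4) (Fin 4) ℤ := fun x s t =>
  if x = 0 then (if s = 0 then (if t = 0 then !![0, 0, 0, 0; 0, 0, 0, 0; 0, 0, 4, 4; 0, 0, 4, 4] else !![0, 0, 0, 0; 0, 0, 0, 0; 0, 0, 4, -4; 0, 0, -4, 4]) else (if t = 0 then !![4, 4, 0, 0; 4, 4, 0, 0; 0, 0, 0, 0; 0, 0, 0, 0] else !![4, -4, 0, 0; -4, 4, 0, 0; 0, 0, 0, 0; 0, 0, 0, 0]))
  else if x = 1 then (if s = 0 then (if t = 0 then !![0, 0, 0, 0; 0, 4, 0, 4; 0, 0, 0, 0; 0, 4, 0, 4] else !![0, 0, 0, 0; 0, 4, 0, -4; 0, 0, 0, 0; 0, -4, 0, 4]) else (if t = 0 then !![4, 0, 4, 0; 0, 0, 0, 0; 4, 0, 4, 0; 0, 0, 0, 0] else !![4, 0, -4, 0; 0, 0, 0, 0; -4, 0, 4, 0; 0, 0, 0, 0]))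
  else (if s = 0 then (if t = 0 then !![4, 0, 0, 4; 0, 0, 0, 0; 0, 0, 0, 0; 4, 0, 0, 4] else !![4, 0, 0, -4; 0, 0, 0, 0; 0, 0, 0, 0; -4, 0, 0, 4]) else (if t = 0 then !![0, 0, 0, 0; 0, 4, 4, 0; 0, 4, 4, 0; 0, 0, 0, 0] else !![0, 0, 0, 0; 0, 4, -4, 0; 0, -4, 4, 0; 0, 0, 0, 0]))

lemma pInt_idem : ∀ (x : Fin 3) (s t : ZMod 2),
    pInt x s t * pInt x s t = (8 : ℤ) • pInt x s t := by decide

lemma pInt_symm : ∀ (x : Fin 3) (s t : ZMod 2), (pInt x s t)ᵀ = pInt x s t := by decide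

lemma pInt_sum : ∀ x : Fin 3,
    pInt x 0 0 + pInt x 0 1 + pInt x 1 0 + pInt x 1 1 = (8 : ℤ) • 1 := by decide

lemma qInt_idem : ∀ (y : Fin 3) (s t : ZMod 2),
    qInt y s t * qInt y s t = (8 : ℤ) • qInt y s t := by decide

lemma qInt_symm : ∀ (y : Fin 3) (s t : ZMod 2), (qInt y s t)ᵀ = qInt y s t := by decide

lemma qInt_sum : ∀ y : Fin 3,
    qInt y 0 0 + qInt y 0 1 + qInt y 1 0 + qInt y 1 1 = (8 : ℤ) • 1 := by decide

lemma trace_win : ∀ (x y : Fin 3) (s t u v : ZMod 2),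
    (pInt x s t * qInt y u v).trace ≠ 0 → ![s, t, s + t] y = ![u, v, 1 + u + v] x := by decide




noncomputable def cmat (m : Matrix (Fin 4) (Fin 4) ℤ) : Matrix (Fin 4) (Fin 4) ℂ :=
  Matrix.of fun i j => (m i j : ℂ) / 8

lemma cmat_apply (m : Matrix (Fin 4) (Fin 4) ℤ) (i j : Fin 4) :
    cmat m i j = (m i j : ℂ) / 8 := rfl

lemma cmat_idem {m : Matrix (Fin 4) (Fin 4) ℤ} (h : m * m = (8 : ℤ) • m) :
    cmat m * cmat m = cmat m := by
  ext i j
  have hz : ((m * m) i j : ℂ) = 8 * (m i j : ℂ) := by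
    rw [h]
    simp only [Matrix.smul_apply, zsmul_eq_mul]
    push_cast
    ring
  rw [Matrix.mul_apply] at hz
  push_cast at hz
  simp only [Matrix.mul_apply, cmat_apply]
  have e : ∀ k : Fin 4, ((m i k : ℂ) / 8) * ((m k j : ℂ) / 8) = ((m i k : ℂ) * (m k j : ℂ)) / 64 :=
    fun k => by ring
  rw [Finset.sum_congr rfl fun k _ => e k, ← Finset.sum_div, hz]
  ring

lemma cmat_herm {m : Matrix (Fin 4) (Fin 4) ℤ} (h : mᵀ = m) : (cmat m)ᴴ = cmat m := by
  ext i j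
  have h2 : m j i = m i j := by
    conv_rhs => rw [← h, transpose_apply]
  simp [conjTranspose_apply, cmat_apply, h2]

lemma cmat_sum_four {a b c d : Matrix (Fin 4) (Fin 4) ℤ} (h : a + b + c + d = (8 : ℤ) • 1) :
    cmat a + cmat b + cmat c + cmat d = 1 := by
  ext i j
  have hz : ((a + b + c + d) i j : ℂ) = 8 * ((1 : Matrix (Fin 4) (Fin 4) ℤ) i j : ℂ) := by
    rw [h]
    simp only [Matrix.smul_apply, zsmul_eq_mul]
    push_cast
    ring
  push_cast [Matrix.add_apply] at hz
  simp only [Matrix.add_apply, cmat_apply, Matrix.one_apply]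
  rcases eq_or_ne i j with rfl | hij
  · simp only [Matrix.one_apply_eq] at hz ⊢
    push_cast at hz ⊢
    rw [← add_div, ← add_div, ← add_div, hz]
    norm_num
  · simp only [Matrix.one_apply_ne hij] at hz
    rw [← add_div, ← add_div, ← add_div, hz]
    simp [hij]

lemma cmat_trace_mul (p q : Matrix (Fin 4) (Fin 4) ℤ) :
    (cmat p * cmat q).trace = ((p * q).trace : ℂ) / 64 := by
  simp only [Matrix.trace, Matrix.diag, Matrix.mul_apply, cmat_apply]
  push_cast
  rw [Finset.sum_div]
  refine Finset.sum_congr rfl fun i _ => ?_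
  rw [Finset.sum_div]
  refine Finset.sum_congr rfl fun k _ => ?_
  ring









lemma sumZ2 {M : Type*} [AddCommMonoid M] (f : ZMod 2 → M) : ∑ s, f s = f 0 + f 1 := by
  have h : (Finset.univ : Finset (ZMod 2)) = {0, 1} := by decide
  rw [h, Finset.sum_insert (by decide), Finset.sum_singleton]

def gA (s t : ZMod 2) : MagicVA :=
  ⟨![s, t, s + t], by
    have : ∀ u v : ZMod 2, ![u, v, u + v] 0 + ![u, v, u + v] 1 + ![u, v, u + v] 2 = 0 := by decide
    exact this s t⟩

def gB (s t : ZMod 2) : MagicVB :=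
  ⟨![s, t, 1 + s + t], by
    have : ∀ u v : ZMod 2,
        ![u, v, 1 + u + v] 0 + ![u, v, 1 + u + v] 1 + ![u, v, 1 + u + v] 2 = 1 := by decide
    exact this s t⟩

lemma va_val (a : MagicVA) : a.val = ![a.val 0, a.val 1, a.val 0 + a.val 1] := by
  have key : ∀ u v w : ZMod 2, u + v + w = 0 → w = u + v := by decide
  funext i
  fin_cases i
  · rfl
  · rfl
  · exact key _ _ _ a.property

lemma vb_val (b : MagicVB) : b.val = ![b.val 0, b.val 1, 1 + b.val 0 + b.val 1] := by
  have key : ∀ u v w : ZMod 2, u + v + w = 1 → w = 1 + u + v := by decide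
  funext i
  fin_cases i
  · rfl
  · rfl
  · exact key _ _ _ b.property

lemma gA_bij : Function.Bijective (fun st : ZMod 2 × ZMod 2 => gA st.1 st.2) := by
  constructor
  · rintro ⟨s, t⟩ ⟨s', t'⟩ h
    have h0 := congrFun (congrArg Subtype.val h) 0
    have h1 := congrFun (congrArg Subtype.val h) 1
    simp only [gA, Matrix.cons_val_zero, Matrix.cons_val_one, Matrix.head_cons] at h0 h1
    exact Prod.ext h0 h1
  · intro a
    exact ⟨(a.val 0, a.val 1), Subtype.ext (va_val a).symm⟩

lemma gB_bij : Function.Bijective (fun st : ZMod 2 × ZMod 2 => gB st.1 st.2) := by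
  constructor
  · rintro ⟨s, t⟩ ⟨s', t'⟩ h
    have h0 := congrFun (congrArg Subtype.val h) 0
    have h1 := congrFun (congrArg Subtype.val h) 1
    simp only [gB, Matrix.cons_val_zero, Matrix.cons_val_one, Matrix.head_cons] at h0 h1
    exact Prod.ext h0 h1
  · intro b
    exact ⟨(b.val 0, b.val 1), Subtype.ext (vb_val b).symm⟩

lemma sum_VA {M : Type*} [AddCommMonoid M] (f : MagicVA → M) :
    ∑ a, f a = f (gA 0 0) + f (gA 0 1) + f (gA 1 0) + f (gA 1 1) := by
  rw [← Fintype.sum_bijective _ gA_bij (fun st => f (gA st.1 st.2)) f (fun st => rfl)]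
  rw [Fintype.sum_prod_type, sumZ2]
  rw [sumZ2 (fun t => f (gA 0 t)), sumZ2 (fun t => f (gA 1 t))]
  abel

lemma sum_VB {M : Type*} [AddCommMonoid M] (f : MagicVB → M) :
    ∑ b, f b = f (gB 0 0) + f (gB 0 1) + f (gB 1 0) + f (gB 1 1) := by
  rw [← Fintype.sum_bijective _ gB_bij (fun st => f (gB st.1 st.2)) f (fun st => rfl)]
  rw [Fintype.sum_prod_type, sumZ2]
  rw [sumZ2 (fun t => f (gB 0 t)), sumZ2 (fun t => f (gB 1 t))]
  abel


end MagicSq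

open MagicSq in
/-- **A winning quantum strategy for the Magic Square game exists.**
There are a finite-dimensional complex inner product space `H`, a state `ψ ≠ 0`
and, for each input, resolutions of the identity into commuting orthogonal
projections labelled by the admissible outputs, such that every jointly
occurring pair of outputs `(a, b)` satisfies the winning condition `a y = b x`.
Hence quantum physics attains the algebraic maximum 9 of the Magic Square Bell
expression. -/
theorem magic_square_quantum_winning_strategy :
    ∃ (H : Type) (_ : NormedAddCommGroup H) (_ : InnerProductSpace ℂ H)
      (_ : FiniteDimensional ℂ H)
      (ψ : H) (P : Fin 3 → MagicVA → H →ₗ[ℂ] H) (Q : Fin 3 → MagicVB → H →ₗ[ℂ] H),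
      ψ ≠ 0 ∧
      (∀ x a, P x a ∘ₗ P x a = P x a) ∧
      (∀ x a (u v : H), ⟪P x a u, v⟫_ℂ = ⟪u, P x a v⟫_ℂ) ∧
      (∀ x, ∑ a, P x a = LinearMap.id) ∧
      (∀ y b, Q y b ∘ₗ Q y b = Q y b) ∧
      (∀ y b (u v : H), ⟪Q y b u, v⟫_ℂ = ⟪u, Q y b v⟫_ℂ) ∧
      (∀ y, ∑ b, Q y b = LinearMap.id) ∧
      (∀ x y a b, P x a ∘ₗ Q y b = Q y b ∘ₗ P x a) ∧
      (∀ x y (a : MagicVA) (b : MagicVB),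
        ⟪ψ, P x a (Q y b ψ)⟫_ℂ ≠ 0 → a.val y = b.val x) := by
  refine ⟨H4, inferInstance, inferInstance, inferInstance, ψ4,
    fun x a => Lm (cmat (pInt x (a.val 0) (a.val 1))),
    fun y b => Rm (cmat (qInt y (b.val 0) (b.val 1))),
    psi_ne, ?_, ?_, ?_, ?_, ?_, ?_, ?_, ?_⟩
  · intro x a
    rw [Lm_mul, cmat_idem (pInt_idem x _ _)]
  · intro x a u v
    exact Lm_adj _ (cmat_herm (pInt_symm x _ _)) u v
  · intro x
    rw [sum_VA (fun a => Lm (cmat (pInt x (a.val 0) (a.val 1))))]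
    simp only [gA, Matrix.cons_val_zero, Matrix.cons_val_one, Matrix.head_cons]
    rw [← Lm_add, ← Lm_add, ← Lm_add, cmat_sum_four (pInt_sum x), Lm_one]
  · intro y b
    rw [Rm_mul, cmat_idem (qInt_idem y _ _)]
  · intro y b u v
    exact Rm_adj _ (cmat_herm (qInt_symm y _ _)) u v
  · intro y
    rw [sum_VB (fun b => Rm (cmat (qInt y (b.val 0) (b.val 1))))]
    simp only [gB, Matrix.cons_val_zero, Matrix.cons_val_one, Matrix.head_cons]
    rw [← Rm_add, ← Rm_add, ← Rm_add, cmat_sum_four (qInt_sum y), Rm_one]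
  · intro x y a b
    exact Lm_Rm_comm _ _
  · intro x y a b h
    have hz : (pInt x (a.val 0) (a.val 1) * qInt y (b.val 0) (b.val 1)).trace ≠ 0 := by
      intro h0
      apply h
      rw [inner_psi, cmat_trace_mul, h0]
      simp
    have hw := trace_win x y _ _ _ _ hz
    rw [va_val a, vb_val b]
    exact hw
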